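/- arXiv:1706.02048 — 3 statements merged into one kernel-verified Lean document; each statement's English description precedes it below -/
import Mathlib

section
/- Let Γ be a maximal consistent set in SLKVF + EXT. Define Γ_Kv = {d ∈ Q : Kv(d) ∈ Γ}, C^{+Γ} = {d ∈ Q : Kf(C,d) ∈ Γ} for finite C ⊆ Q, and M_Γ = {C^{+Γ} : C a finite subset of Q}. Let g : M_Γ × {0,1} → G be an injection and define V_p(⟨X,i⟩, d) = g(∅^{+Γ}, 0) if d ∈ Γ_Kv, = g(X,0) if d ∈ X \\ Γ_Kv, and = g(X,i) if d ∈ Q \\ X. Then for all finite C ⊆ Q and d ∈ Q: (1) if Kv(d) ∈ Γ then there is x ∈ G with V_p(⟨X,i⟩,d) = x for all ⟨X,i⟩ ∈ M_Γ×{0,1}; (2) if Kv(d) ∉ Γ then there are ⟨X,i⟩, ⟨X',i'⟩ with V_p(⟨X,i⟩,d) ≠ V_p(⟨X',i'⟩,d); (3) if Kf(C,d) ∈ Γ then for all ⟨X,i⟩, ⟨X',i'⟩, V_p(⟨X,i⟩,C) = V_p(⟨X',i'⟩,C) implies V_p(⟨X,i⟩,d) = V_p(⟨X',i'⟩,d);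 (4) if Kf(C,d) ∉ Γ then there are ⟨X,i⟩, ⟨X',i'⟩ with V_p(⟨X,i⟩,C) = V_p(⟨X',i'⟩,C) and V_p(⟨X,i⟩,d) ≠ V_p(⟨X',i'⟩,d). -/
open scoped Classical

/-! Single-agent language `LKVF` with operators `Kv`, `Kf` and `K`. -/

inductive Formula (P Q : Type) : Type where
  | top : Formula P Q
  | atom : P → Formula P Q
  | Kv : Q → Formula P Q
  | Kf : Finset Q → Q → Formula P Q
  | and : Formula P Q → Formula P Q → Formula P Q
  | not : Formula P Q → Formula P Q
  | K : Formula P Q → Formula P Q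

namespace Formula

variable {P Q : Type}

/-- Material implication, defined from `and` and `not`. -/
def imp (φ ψ : Formula P Q) : Formula P Q := Formula.not (Formula.and φ (Formula.not ψ))

/-- Falsum. -/
def bot : Formula P Q := Formula.not Formula.top

/-- Disjunction. -/
def or (φ ψ : Formula P Q) : Formula P Q :=
  Formula.not (Formula.and (Formula.not φ) (Formula.not ψ))

end Formula

variable {P Q G : Type}

/-- Finite conjunction of a list of formulas. -/
def conj : List (Formula P Q) → Formula P Q
  | [] => Formula.top
  | φ :: l => Formula.and φ (conj l)

/-- Finite disjunction of a list of formulas. -/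
def disj : List (Formula P Q) → Formula P Q
  | [] => Formula.bot
  | φ :: l => Formula.or φ (disj l)

/-- `φ` is a propositional tautology: every Boolean valuation commuting with the
Boolean connectives makes it true. -/
def IsTaut (φ : Formula P Q) : Prop :=
  ∀ v : Formula P Q → Bool,
    v Formula.top = true →
    (∀ α β, v (Formula.and α β) = (v α && v β)) →
    (∀ α, v (Formula.not α) = (! v α)) →
    v φ = true

section Axioms

variable (P Q : Type) [LinearOrder Q]

/-- `⋀_{d ∈ D} Kf(C,d)`. -/
def finConjKf (C D : Finset Q) : Formula P Q :=
  conj ((D.sort (· ≤ ·)).map fun d => Formula.Kf C d)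

/-- `⋀_{c ∈ C} Kv(c)`. -/
def finConjKv (C : Finset Q) : Formula P Q :=
  conj ((C.sort (· ≤ ·)).map fun c => Formula.Kv c)

/-- The axioms of the base system `SLKVF`. -/
inductive SLKVF : Formula P Q → Prop where
  | taut {φ : Formula P Q} : IsTaut φ → SLKVF φ
  | axK (φ ψ : Formula P Q) :
      SLKVF (Formula.imp (Formula.K (Formula.imp φ ψ))
        (Formula.imp (Formula.K φ) (Formula.K ψ)))
  | axT (φ : Formula P Q) : SLKVF (Formula.imp (Formula.K φ) φ)
  | ax4 (φ : Formula P Q) : SLKVF (Formula.imp (Formula.K φ) (Formula.K (Formula.K φ)))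
  | ax5 (φ : Formula P Q) :
      SLKVF (Formula.imp (Formula.not (Formula.K φ)) (Formula.K (Formula.not (Formula.K φ))))
  | kv4 (d : Q) : SLKVF (Formula.imp (Formula.Kv d) (Formula.K (Formula.Kv d)))
  | kv5 (d : Q) :
      SLKVF (Formula.imp (Formula.not (Formula.Kv d)) (Formula.K (Formula.not (Formula.Kv d))))
  | kf4 (C : Finset Q) (d : Q) :
      SLKVF (Formula.imp (Formula.Kf C d) (Formula.K (Formula.Kf C d)))
  | kf5 (C : Finset Q) (d : Q) :
      SLKVF (Formula.imp (Formula.not (Formula.Kf C d))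
        (Formula.K (Formula.not (Formula.Kf C d))))
  | proj {C : Finset Q} {c : Q} : c ∈ C → SLKVF (Formula.Kf C c)
  | tran (C D : Finset Q) (e : Q) :
      SLKVF (Formula.imp (Formula.and (finConjKf P Q C D) (Formula.Kf D e)) (Formula.Kf C e))
  | vf (C : Finset Q) (d : Q) :
      SLKVF (Formula.imp (Formula.and (finConjKv P Q C) (Formula.Kf C d)) (Formula.Kv d))

end Axioms

/-- Provability from an axiom set `Ax` with rules modus ponens and necessitation. -/
inductive Prov (Ax : Formula P Q → Prop) : Formula P Q → Prop where
  | ax {φ : Formula P Q} : Ax φ → Prov Ax φ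
  | mp {φ ψ : Formula P Q} : Prov Ax (Formula.imp φ ψ) → Prov Ax φ → Prov Ax ψ
  | nec {φ : Formula P Q} : Prov Ax φ → Prov Ax (Formula.K φ)

/-- `Γ` is consistent: no finite conjunction of its members proves `⊥`. -/
def Consistent (Ax : Formula P Q → Prop) (Γ : Set (Formula P Q)) : Prop :=
  ¬ ∃ L : List (Formula P Q), (∀ φ ∈ L, φ ∈ Γ) ∧ Prov Ax (Formula.imp (conj L) Formula.bot)

/-- `Γ` is maximal consistent. -/
def MCS (Ax : Formula P Q → Prop) (Γ : Set (Formula P Q)) : Prop :=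
  Consistent Ax Γ ∧ ∀ φ : Formula P Q, φ ∈ Γ ∨ Formula.not φ ∈ Γ

/-! Function domains: sets of finitary functions on the value domain `G`. -/

/-- A function domain on `G`: a set of `n`-ary functions on `G` for various `n`. -/
abbrev FnDom (G : Type) : Type := Set (Σ n : ℕ, (Fin n → G) → G)

/-- `F` contains all projection functions `id_{i,j}` for `0 < i ≤ j`. -/
def hasProjections (F : FnDom G) : Prop :=
  ∀ (j : ℕ) (k : Fin j), (⟨j, fun x => x k⟩ : Σ n : ℕ, (Fin n → G) → G) ∈ F

/-- `F` is closed under composition: for an `n`-ary `f ∈ F` with `n ≥ 1` and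
`m`-ary `g₁, …, gₙ ∈ F`, the composition `f(g₁(·),…,gₙ(·))` is in `F`. -/
def closedComp (F : FnDom G) : Prop :=
  ∀ (n m : ℕ), 0 < n → ∀ f : (Fin n → G) → G,
    (⟨n, f⟩ : Σ n : ℕ, (Fin n → G) → G) ∈ F →
    ∀ g : Fin n → (Fin m → G) → G,
      (∀ k, (⟨m, g k⟩ : Σ n : ℕ, (Fin n → G) → G) ∈ F) →
      (⟨m, fun x => f fun k => g k x⟩ : Σ n : ℕ, (Fin n → G) → G) ∈ F

/-- The tuple of values of the variables of the finite set `C`, in the fixed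
(increasing) order of its elements. -/
def tupleV [LinearOrder Q] (v : Q → G) (C : Finset Q) : Fin C.card → G :=
  fun k => v ((C.sort (· ≤ ·)).get (Fin.cast (Finset.length_sort (s := C) (· ≤ ·)).symm k))

/-- A model of `LKVF`: worlds, an assignment of propositional letters and an
assignment of values to variables. -/
structure Model (P Q G : Type) : Type 1 where
  W : Type
  U : W → P → Prop
  V : W → Q → G

variable [LinearOrder Q]

/-- Truth of a formula at a world of a model, relative to a function domain `F`. -/
def sat (F : FnDom G) (M : Model P Q G) (w : M.W) : Formula P Q → Prop
  | Formula.top => True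
  | Formula.atom p => M.U w p
  | Formula.Kv d => ∃ x : G, ∀ w' : M.W, M.V w' d = x
  | Formula.Kf C d =>
      ∃ f : (Fin C.card → G) → G,
        (⟨C.card, f⟩ : Σ n : ℕ, (Fin n → G) → G) ∈ F ∧
        ∀ w' : M.W, M.V w' d = f (tupleV (M.V w') C)
  | Formula.and φ ψ => sat F M w φ ∧ sat F M w ψ
  | Formula.not φ => ¬ sat F M w φ
  | Formula.K φ => ∀ w' : M.W, sat F M w' φ

/-- Validity over all models built on the value domain `G` and function domain `F`. -/
def Valid (F : FnDom G) (φ : Formula P Q) : Prop :=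
  ∀ (M : Model P Q G) (w : M.W), sat F M w φ

/-! STATEMENT 5: properties of the valuation `V_p` built from a maximal consistent
set in `SLKVF + EXT` via an injection `g : M_Γ × {0,1} → G`. -/

/-- The axiom system `SLKVF + EXT`. -/
def AxExt (P Q : Type) [LinearOrder Q] : Formula P Q → Prop := fun φ =>
  SLKVF P Q φ ∨ ∃ (d : Q) (C : Finset Q), φ = Formula.imp (Formula.Kv d) (Formula.Kf C d)

/-- `C^{+Γ} = {d : Kf(C,d) ∈ Γ}`. -/
def plusSet {P Q : Type} (Γ : Set (Formula P Q)) (C : Finset Q) : Set Q :=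
  {d : Q | Formula.Kf C d ∈ Γ}

/-- `Γ_Kv = {d : Kv(d) ∈ Γ}`. -/
def GKv {P Q : Type} (Γ : Set (Formula P Q)) : Set Q := {d : Q | Formula.Kv d ∈ Γ}

/-- `M_Γ`, the collection of all finitely generated closed sets. -/
def MGamma {P Q : Type} (Γ : Set (Formula P Q)) : Set (Set Q) :=
  {X : Set Q | ∃ C : Finset Q, X = plusSet Γ C}

/-- The valuation `V_p` on `M_Γ × {0,1}`:
`g(∅^{+Γ},0)` if `d ∈ Γ_Kv`, `g(X,0)` if `d ∈ X \ Γ_Kv`, and `g(X,i)` if `d ∉ X`. -/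
noncomputable def Vp {P Q G : Type} (Γ : Set (Formula P Q)) (g : Set Q → Bool → G)
    (X : Set Q) (i : Bool) (d : Q) : G :=
  if Formula.Kv d ∈ Γ then g (plusSet Γ (∅ : Finset Q)) false
  else if d ∈ X then g X false
  else g X i

/-!
Since `g` is injective, two points `⟨X, i⟩`, `⟨X', i'⟩` at which a variable outside `Γ_Kv` takes
the same value have `X = X'`, and also `i = i'` if the variable lies outside `X`; a variable in `X`
does not separate the two copies of `X`.

If `Kf(C,d) ∉ Γ`, the two copies of `C^{+Γ}` agree on `C ⊆ C^{+Γ}` (PROJ) but not on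
`d ∉ C^{+Γ}`. If `Kf(C,d) ∈ Γ` and `Kv(d) ∉ Γ`, VF yields some `c ∈ C` with `Kv(c) ∉ Γ`, so
two points agreeing on `C` lie over the same `X = D^{+Γ}`; if moreover `d ∉ X`, then EXT and TRAN
yield some `c ∈ C \ X` with `Kv(c) ∉ Γ`, so they are the same copy.
-/

namespace MCS

variable {P Q : Type} {Ax : Formula P Q → Prop} {Γ : Set (Formula P Q)}

theorem mem_of_prov (h : MCS Ax Γ) (htaut : ∀ ψ, IsTaut ψ → Ax ψ) {φ : Formula P Q}
    (hφ : Prov Ax φ) : φ ∈ Γ := by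
  refine (h.2 φ).resolve_right fun hn => h.1 ⟨[Formula.not φ], by simpa using hn, ?_⟩
  have t : IsTaut (Formula.imp φ (Formula.imp (conj [Formula.not φ]) Formula.bot)) := by
    intro v htop hand hnot
    simp only [Formula.imp, Formula.bot, conj, htop, hand, hnot]
    cases v φ <;> rfl
  exact Prov.mp (Prov.ax (htaut _ t)) hφ

theorem mem_of_imp_mem (h : MCS Ax Γ) (htaut : ∀ ψ, IsTaut ψ → Ax ψ) {φ ψ : Formula P Q}
    (himp : Formula.imp φ ψ ∈ Γ) (hφ : φ ∈ Γ) : ψ ∈ Γ := by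
  refine (h.2 ψ).resolve_right fun hn =>
    h.1 ⟨[Formula.imp φ ψ, φ, Formula.not ψ], by simp [himp, hφ, hn], Prov.ax (htaut _ ?_)⟩
  intro v htop hand hnot
  simp only [Formula.imp, Formula.bot, conj, htop, hand, hnot]
  cases v φ <;> cases v ψ <;> rfl

theorem and_mem (h : MCS Ax Γ) (htaut : ∀ ψ, IsTaut ψ → Ax ψ) {φ ψ : Formula P Q}
    (hφ : φ ∈ Γ) (hψ : ψ ∈ Γ) : Formula.and φ ψ ∈ Γ := by
  have t : IsTaut (Formula.imp φ (Formula.imp ψ (Formula.and φ ψ))) := by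
    intro v _ hand hnot
    simp only [Formula.imp, hand, hnot]
    cases v φ <;> cases v ψ <;> rfl
  have hφψ := h.mem_of_imp_mem htaut (h.mem_of_prov htaut (Prov.ax (htaut _ t))) hφ
  exact h.mem_of_imp_mem htaut hφψ hψ

theorem conj_mem (h : MCS Ax Γ) (htaut : ∀ ψ, IsTaut ψ → Ax ψ) {L : List (Formula P Q)}
    (hL : ∀ φ ∈ L, φ ∈ Γ) : conj L ∈ Γ := by
  induction L with
  | nil => exact h.mem_of_prov htaut (Prov.ax (htaut _ fun _ htop _ _ => htop))
  | cons φ L ih =>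
    exact h.and_mem htaut (hL φ List.mem_cons_self)
      (ih fun ψ hψ => hL ψ (List.mem_cons_of_mem φ hψ))

end MCS

theorem AxExt.of_isTaut {P Q : Type} [LinearOrder Q] {φ : Formula P Q} (hφ : IsTaut φ) :
    AxExt P Q φ :=
  Or.inl (SLKVF.taut hφ)

namespace MCS

variable {P Q : Type} [LinearOrder Q] {Γ : Set (Formula P Q)}

theorem mem_of_slkvf (h : MCS (AxExt P Q) Γ) {φ : Formula P Q} (hφ : SLKVF P Q φ) : φ ∈ Γ :=
  h.mem_of_prov (fun _ => AxExt.of_isTaut) (Prov.ax (Or.inl hφ))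

theorem mem_of_imp_mem_axExt (h : MCS (AxExt P Q) Γ) {φ ψ : Formula P Q}
    (himp : Formula.imp φ ψ ∈ Γ) (hφ : φ ∈ Γ) : ψ ∈ Γ :=
  h.mem_of_imp_mem (fun _ => AxExt.of_isTaut) himp hφ

theorem conj_map_sort_mem (h : MCS (AxExt P Q) Γ) {C : Finset Q} {f : Q → Formula P Q}
    (hf : ∀ c ∈ C, f c ∈ Γ) : conj ((C.sort (· ≤ ·)).map f) ∈ Γ :=
  h.conj_mem (fun _ => AxExt.of_isTaut) fun _ hφ =>
    let ⟨c, hc, hfc⟩ := List.mem_map.1 hφ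
    hfc ▸ hf c ((Finset.mem_sort _).1 hc)

theorem kf_mem_of_kv_mem (h : MCS (AxExt P Q) Γ) (C : Finset Q) {d : Q}
    (hd : Formula.Kv d ∈ Γ) : Formula.Kf C d ∈ Γ :=
  h.mem_of_imp_mem_axExt
    (h.mem_of_prov (fun _ => AxExt.of_isTaut) (Prov.ax (Or.inr ⟨d, C, rfl⟩))) hd

theorem kv_mem_of_kf_mem (h : MCS (AxExt P Q) Γ) {C : Finset Q} {d : Q}
    (hC : ∀ c ∈ C, Formula.Kv c ∈ Γ) (hd : Formula.Kf C d ∈ Γ) : Formula.Kv d ∈ Γ :=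
  h.mem_of_imp_mem_axExt (h.mem_of_slkvf (SLKVF.vf C d))
    (h.and_mem (fun _ => AxExt.of_isTaut) (h.conj_map_sort_mem hC) hd)

theorem kf_mem_trans (h : MCS (AxExt P Q) Γ) {C D : Finset Q} {d : Q}
    (hD : ∀ c ∈ D, Formula.Kf C c ∈ Γ) (hd : Formula.Kf D d ∈ Γ) : Formula.Kf C d ∈ Γ :=
  h.mem_of_imp_mem_axExt (h.mem_of_slkvf (SLKVF.tran C D d))
    (h.and_mem (fun _ => AxExt.of_isTaut) (h.conj_map_sort_mem hD) hd)

end MCS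

theorem tupleV_eq_tupleV_iff {Q G : Type} [LinearOrder Q] {v v' : Q → G} {C : Finset Q} :
    tupleV v C = tupleV v' C ↔ ∀ c ∈ C, v c = v' c := by
  refine ⟨fun h c hc => ?_,
    fun h => funext fun k => h _ ((Finset.mem_sort _).1 (List.get_mem _ _))⟩
  obtain ⟨n, hn, rfl⟩ := List.mem_iff_getElem.1 ((Finset.mem_sort (· ≤ ·)).2 hc)
  simpa [tupleV] using congrFun h ⟨n, by simpa using hn⟩

section Vp

variable {P Q G : Type} {Γ : Set (Formula P Q)} {g : Set Q → Bool → G}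

theorem vp_of_kv_mem {X : Set Q} {i : Bool} {d : Q} (hd : Formula.Kv d ∈ Γ) :
    Vp Γ g X i d = g (plusSet Γ ∅) false :=
  if_pos hd

theorem vp_of_mem {X : Set Q} {i : Bool} {d : Q} (hd : Formula.Kv d ∉ Γ) (hdX : d ∈ X) :
    Vp Γ g X i d = g X false := by
  simp only [Vp, if_neg hd, if_pos hdX]

theorem vp_of_not_mem {X : Set Q} {i : Bool} {d : Q} (hd : Formula.Kv d ∉ Γ) (hdX : d ∉ X) :
    Vp Γ g X i d = g X i := by
  simp only [Vp, if_neg hd, if_neg hdX]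

theorem vp_eq_vp_of_mem {X : Set Q} {i i' : Bool} {d : Q} (hdX : d ∈ X) :
    Vp Γ g X i d = Vp Γ g X i' d := by
  simp only [Vp, if_pos hdX]

theorem vp_false_ne_vp_true
    (hg : ∀ X ∈ MGamma Γ, ∀ X' ∈ MGamma Γ, ∀ i i' : Bool, g X i = g X' i' → X = X' ∧ i = i')
    {X : Set Q} (hX : X ∈ MGamma Γ) {d : Q} (hd : Formula.Kv d ∉ Γ) (hdX : d ∉ X) :
    Vp Γ g X false d ≠ Vp Γ g X true d := by
  rw [vp_of_not_mem hd hdX, vp_of_not_mem hd hdX]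
  exact fun he => Bool.false_ne_true (hg X hX X hX _ _ he).2

theorem eq_of_vp_eq_of_kv_not_mem
    (hg : ∀ X ∈ MGamma Γ, ∀ X' ∈ MGamma Γ, ∀ i i' : Bool, g X i = g X' i' → X = X' ∧ i = i')
    {X X' : Set Q} (hX : X ∈ MGamma Γ) (hX' : X' ∈ MGamma Γ) {i i' : Bool} {c : Q}
    (hc : Formula.Kv c ∉ Γ) (heq : Vp Γ g X i c = Vp Γ g X' i' c) :
    X = X' ∧ (c ∉ X → i = i') := by
  by_cases hcX : c ∈ X <;> by_cases hcX' : c ∈ X' <;>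
    simp only [vp_of_mem, vp_of_not_mem, hc, hcX, hcX', not_false_eq_true] at heq <;>
    obtain ⟨rfl, hii⟩ := hg X hX X' hX' _ _ heq
  all_goals exact ⟨rfl, fun hcnX => by first | exact hii | contradiction⟩

theorem vp_eq_vp_of_kf_mem [LinearOrder Q] (hΓ : MCS (AxExt P Q) Γ)
    (hg : ∀ X ∈ MGamma Γ, ∀ X' ∈ MGamma Γ, ∀ i i' : Bool, g X i = g X' i' → X = X' ∧ i = i')
    {C : Finset Q} {d : Q} (hCd : Formula.Kf C d ∈ Γ) {X X' : Set Q} (hX : X ∈ MGamma Γ)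
    (hX' : X' ∈ MGamma Γ) {i i' : Bool} (hC : ∀ c ∈ C, Vp Γ g X i c = Vp Γ g X' i' c) :
    Vp Γ g X i d = Vp Γ g X' i' d := by
  by_cases hd : Formula.Kv d ∈ Γ
  · rw [vp_of_kv_mem hd, vp_of_kv_mem hd]
  obtain ⟨c, hcC, hc⟩ : ∃ c ∈ C, Formula.Kv c ∉ Γ := by
    by_contra! hC_kv
    exact hd (hΓ.kv_mem_of_kf_mem hC_kv hCd)
  obtain ⟨rfl, -⟩ := eq_of_vp_eq_of_kv_not_mem hg hX hX' hc (hC c hcC)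
  by_cases hdX : d ∈ X
  · exact vp_eq_vp_of_mem hdX
  obtain ⟨D, rfl⟩ := hX
  obtain ⟨c', hc'C, hc'X, hc'⟩ : ∃ c ∈ C, c ∉ plusSet Γ D ∧ Formula.Kv c ∉ Γ := by
    by_contra! hC_sub
    refine hdX (hΓ.kf_mem_trans (fun c hc => ?_) hCd)
    by_cases hcX : c ∈ plusSet Γ D
    · exact hcX
    · exact hΓ.kf_mem_of_kv_mem D (hC_sub c hc hcX)
  rw [(eq_of_vp_eq_of_kv_not_mem hg hX' hX' hc' (hC c' hc'C)).2 hc'X]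

end Vp

theorem statement5_general (P Q G : Type) [LinearOrder Q]
    (Γ : Set (Formula P Q)) (hΓ : MCS (AxExt P Q) Γ)
    (g : Set Q → Bool → G)
    (hg : ∀ X ∈ MGamma Γ, ∀ X' ∈ MGamma Γ, ∀ i i' : Bool,
      g X i = g X' i' → X = X' ∧ i = i') :
    (∀ d : Q, Formula.Kv d ∈ Γ →
      ∃ x : G, ∀ X ∈ MGamma Γ, ∀ i : Bool, Vp Γ g X i d = x) ∧
    (∀ d : Q, Formula.Kv d ∉ Γ →
      ∃ X ∈ MGamma Γ, ∃ X' ∈ MGamma Γ, ∃ i i' : Bool,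
        Vp Γ g X i d ≠ Vp Γ g X' i' d) ∧
    (∀ (C : Finset Q) (d : Q), Formula.Kf C d ∈ Γ →
      ∀ X ∈ MGamma Γ, ∀ X' ∈ MGamma Γ, ∀ i i' : Bool,
        tupleV (Vp Γ g X i) C = tupleV (Vp Γ g X' i') C →
          Vp Γ g X i d = Vp Γ g X' i' d) ∧
    (∀ (C : Finset Q) (d : Q), Formula.Kf C d ∉ Γ →
      ∃ X ∈ MGamma Γ, ∃ X' ∈ MGamma Γ, ∃ i i' : Bool,
        tupleV (Vp Γ g X i) C = tupleV (Vp Γ g X' i') C ∧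
          Vp Γ g X i d ≠ Vp Γ g X' i' d) := by
  refine ⟨fun d hd => ⟨_, fun X _ i => vp_of_kv_mem hd⟩, fun d hd => ?_,
    fun C d hCd X hX X' hX' i i' hC =>
      vp_eq_vp_of_kf_mem hΓ hg hCd hX hX' (tupleV_eq_tupleV_iff.1 hC), fun C d hCd => ?_⟩
  · have hd_empty : d ∉ plusSet Γ ∅ := fun h => hd (hΓ.kv_mem_of_kf_mem (by simp) h)
    exact ⟨_, ⟨∅, rfl⟩, _, ⟨∅, rfl⟩, false, true, vp_false_ne_vp_true hg ⟨∅, rfl⟩ hd hd_empty⟩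
  · have hd : Formula.Kv d ∉ Γ := fun h => hCd (hΓ.kf_mem_of_kv_mem C h)
    have hC : ∀ c ∈ C, c ∈ plusSet Γ C := fun c hc => hΓ.mem_of_slkvf (SLKVF.proj hc)
    exact ⟨_, ⟨C, rfl⟩, _, ⟨C, rfl⟩, false, true,
      tupleV_eq_tupleV_iff.2 fun c hc => vp_eq_vp_of_mem (hC c hc),
      vp_false_ne_vp_true hg ⟨C, rfl⟩ hd hCd⟩

theorem statement5 (P Q G : Type) [Countable P] [Infinite P] [LinearOrder Q]
    (Γ : Set (Formula P Q)) (hΓ : MCS (AxExt P Q) Γ)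
    (g : Set Q → Bool → G)
    (hg : ∀ X ∈ MGamma Γ, ∀ X' ∈ MGamma Γ, ∀ i i' : Bool,
      g X i = g X' i' → X = X' ∧ i = i') :
    (∀ d : Q, Formula.Kv d ∈ Γ →
      ∃ x : G, ∀ X ∈ MGamma Γ, ∀ i : Bool, Vp Γ g X i d = x) ∧
    (∀ d : Q, Formula.Kv d ∉ Γ →
      ∃ X ∈ MGamma Γ, ∃ X' ∈ MGamma Γ, ∃ i i' : Bool,
        Vp Γ g X i d ≠ Vp Γ g X' i' d) ∧
    (∀ (C : Finset Q) (d : Q), Formula.Kf C d ∈ Γ →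
      ∀ X ∈ MGamma Γ, ∀ X' ∈ MGamma Γ, ∀ i i' : Bool,
        tupleV (Vp Γ g X i) C = tupleV (Vp Γ g X' i') C →
          Vp Γ g X i d = Vp Γ g X' i' d) ∧
    (∀ (C : Finset Q) (d : Q), Formula.Kf C d ∉ Γ →
      ∃ X ∈ MGamma Γ, ∃ X' ∈ MGamma Γ, ∃ i i' : Bool,
        tupleV (Vp Γ g X i) C = tupleV (Vp Γ g X' i') C ∧
          Vp Γ g X i d ≠ Vp Γ g X' i' d) :=
  statement5_general P Q G Γ hΓ g hg
end

section
/- When the function domain is minimal, i.e., F = {id_{i,j} : i,j ∈ ℕ, 0 < i ≤ j} where id_{i,j}(x_1,…,x_j) = x_i, the schemes CHOO: Kf(C,d) → ⋁_{c∈C} Kf({c},d) (understood as ¬Kf(∅,d) when C = ∅) and EQU: Kf({c},d) → Kf({d},c) are valid in every model over (G,F). -/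
open scoped Classical

variable {P Q G : Type}

variable [LinearOrder Q]

/-! STATEMENT 8: over the minimal function domain of projection functions, the
schemes CHOO and EQU are valid. -/

/-- The minimal function domain: the projection functions `id_{i,j}`, `0 < i ≤ j`. -/
def Fmin (G : Type) : FnDom G :=
  {p : Σ n : ℕ, (Fin n → G) → G | ∃ k : Fin p.1, p.2 = fun x => x k}

/-- `CHOO : Kf(C,d) → ⋁_{c ∈ C} Kf({c},d)` (which is `¬Kf(∅,d)` when `C = ∅`). -/
def chooF (P Q : Type) [LinearOrder Q] (C : Finset Q) (d : Q) : Formula P Q :=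
  Formula.imp (Formula.Kf C d)
    (disj ((C.sort (· ≤ ·)).map fun c => Formula.Kf ({c} : Finset Q) d))

/-- `EQU : Kf({c},d) → Kf({d},c)`. -/
def equF (P Q : Type) (c d : Q) : Formula P Q :=
  Formula.imp (Formula.Kf ({c} : Finset Q) d) (Formula.Kf ({d} : Finset Q) c)


lemma sat_disj_of_mem {P Q G : Type} [LinearOrder Q] (F : FnDom G) (M : Model P Q G)
    (w : M.W) : ∀ (L : List (Formula P Q)) (φ : Formula P Q),
    φ ∈ L → sat F M w φ → sat F M w (disj L) := by
  intro L
  induction L with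
  | nil => intro φ h; simp at h
  | cons a l ih =>
    intro φ h hs
    rcases List.mem_cons.mp h with h | h
    · subst h
      simp only [disj, Formula.or, sat]
      intro ⟨h1, _⟩; exact h1 hs
    · simp only [disj, Formula.or, sat]
      intro ⟨_, h2⟩; exact h2 (ih φ h hs)

lemma tupleV_singleton {Q G : Type} [LinearOrder Q] (v : Q → G) (c : Q)
    (k : Fin (({c} : Finset Q).card)) : tupleV v ({c} : Finset Q) k = v c := by
  simp [tupleV, Finset.sort_singleton]

theorem statement8 (P Q G : Type) [Countable P] [Infinite P] [LinearOrder Q] :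
    (∀ (C : Finset Q) (d : Q), Valid (Fmin G) (chooF P Q C d)) ∧
    (∀ c d : Q, Valid (Fmin G) (equF P Q c d)) := by
  constructor
  · intro C d M w
    simp only [chooF, Formula.imp, sat, not_and, not_not]
    rintro ⟨f, ⟨k, hk⟩, hval⟩
    have hk' : f = fun x => x k := hk
    set c : Q := (C.sort (· ≤ ·)).get (Fin.cast (Finset.length_sort (s := C) (· ≤ ·)).symm k) with hc
    apply sat_disj_of_mem (F := Fmin G) (M := M) (w := w) _ (Formula.Kf ({c} : Finset Q) d)
    · exact List.mem_map.mpr ⟨c, by simp [hc, List.get_mem], rfl⟩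
    · refine ⟨fun x => x ⟨0, by simp⟩, ⟨⟨0, by simp⟩, rfl⟩, ?_⟩
      intro w'
      simp only [tupleV_singleton]
      rw [hval w', hk']
      rfl
  · intro c d M w
    simp only [equF, Formula.imp, sat, not_and, not_not]
    rintro ⟨f, ⟨k, hk⟩, hval⟩
    have hk' : f = fun x => x k := hk
    have hcd : ∀ w' : M.W, M.V w' d = M.V w' c := by
      intro w'
      rw [hval w', hk']
      simp only [tupleV_singleton]
    refine ⟨fun x => x ⟨0, by simp⟩, ⟨⟨0, by simp⟩, rfl⟩, ?_⟩
    intro w'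
    simp only [tupleV_singleton]
    rw [hcd w']
end

section
/- In the setting of the intermediate function domain construction (G = 2^{P_f(Q)}, Γ maximal consistent in SLKVF, M_Γ = {C^{+Γ} : C finite ⊆ Q} ∪ {Γ_Kv}, g : P_f(Q) → M_Γ a surjection, and V_0, V_1 : Q → G defined by V_0(d)[C] = 0 iff d ∈ g(C), with V_1 agreeing with V_0 except that V_1(d)[C] = 0 whenever g(C) = Γ_Kv): for every d ∈ Q, if Kv(d) ∈ Γ then V_0(d) = V_1(d), and if Kv(d) ∉ Γ then V_0(d) ≠ V_1(d). -/
open scoped Classical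

variable {P Q G : Type}

variable [LinearOrder Q]

/-- `M_Γ = {C^{+Γ} : C finite ⊆ Q} ∪ {Γ_Kv}`. -/
def MGammaInt {P Q : Type} (Γ : Set (Formula P Q)) : Set (Set Q) :=
  {X : Set Q | ∃ C : Finset Q, X = plusSet Γ C} ∪ {GKv Γ}

/-- `V₀(d)[C] = 0` if `d ∈ g(C)`, else `1`. -/
noncomputable def V0 {P Q : Type} (Γ : Set (Formula P Q)) (g : Finset Q → Set Q)
    (d : Q) : Finset Q → Bool :=
  fun C => if d ∈ g C then false else true

/-- `V₁(d)[C] = V₀(d)[C]` unless `g(C) = Γ_Kv`, in which case it is `0`. -/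
noncomputable def V1 {P Q : Type} (Γ : Set (Formula P Q)) (g : Finset Q → Set Q)
    (d : Q) : Finset Q → Bool :=
  fun C => if g C = GKv Γ then false else V0 Γ g d C

theorem statement13 (P Q : Type) [Countable P] [Infinite P] [LinearOrder Q]
    (Γ : Set (Formula P Q)) (hΓ : MCS (SLKVF P Q) Γ)
    (g : Finset Q → Set Q)
    (hg1 : ∀ C : Finset Q, g C ∈ MGammaInt Γ)
    (hg2 : ∀ X ∈ MGammaInt Γ, ∃ C : Finset Q, g C = X) :
    ∀ d : Q,
      (Formula.Kv d ∈ Γ → V0 Γ g d = V1 Γ g d) ∧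
      (Formula.Kv d ∉ Γ → V0 Γ g d ≠ V1 Γ g d) := by
  intro d
  constructor
  · intro hd
    funext C
    by_cases h : g C = GKv Γ
    · simp [V0, V1, h, GKv, hd]
    · simp [V1, h]
  · intro hd
    obtain ⟨C, hC⟩ := hg2 (GKv Γ) (Or.inr rfl)
    intro heq
    have := congrFun heq C
    have hnot : d ∉ g C := by rw [hC]; exact hd
    simp [V0, V1, hC, hnot] at this
    exact hd this
end
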